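/- Let Ω^{ij} be an invertible antisymmetric 4×4 complex matrix (a symplectic form on ℂ⁴). Consider the space of tensors T_{ij,kl} on ℂ⁴ satisfying: antisymmetry in (i,j), antisymmetry in (k,l), the cyclic identity T_{ij,kl} + T_{jk,il} + T_{ki,jl} = 0, and the tracelessness conditions Ω^{ij}T_{ij,kl} = 0 and Ω^{jk}T_{ij,kl} = 0 for all remaining free indices (summation over repeated indices). This space has complex dimension 14. -/

import Mathlib

/-!
Tensors antisymmetric in each index pair and satisfying the cyclic identity are symmetric under
exchange of the pairs; on a 4-dimensional space they form a 20-dimensional space `W`, with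
coordinates the entries `T a b c d` with `a < b`, `c < d`, `(a, b) ≤ (c, d)`, other than
`T 0 1 2 3`, which the cyclic identity expresses through `T 0 2 1 3` and `T 0 3 1 2`. The `Ω`-trace
over the first pair maps `W` onto the 6-dimensional space of 2-forms: on Kulkarni–Nomizu-type
products of `Ω⁻¹` with a 2-form `A` it is `A ↦ -12 A + 2 ⟨Ω, A⟩ Ω⁻¹`, which is invertible. The
second trace condition follows from the first by the cyclic identity, so the space in question is
the kernel of this trace on `W`, of dimension `20 - 6 = 14`.
-/

open Finset Module Matrix

namespace SymplecticCurvature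

theorem finrank_inf_ker_add_finrank_map {K V V' : Type*} [Field K] [AddCommGroup V] [Module K V]
    [AddCommGroup V'] [Module K V'] (f : V →ₗ[K] V') (W : Submodule K V) [FiniteDimensional K W] :
    finrank K ↥(W ⊓ LinearMap.ker f) + finrank K ↥(W.map f) = finrank K W := by
  rw [← (f.domRestrict W).finrank_range_add_finrank_ker, LinearMap.range_domRestrict,
    LinearMap.ker_domRestrict, add_comm]
  congr 1
  rw [← (Submodule.comapSubtypeEquivOfLe (inf_le_left : W ⊓ LinearMap.ker f ≤ W)).finrank_eq,
    Submodule.comap_inf, Submodule.comap_subtype_self, top_inf_eq]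

theorem finrank_eq_card_of_readout {K V ι : Type*} [Field K] [AddCommGroup V] [Module K V]
    [Fintype ι] [DecidableEq ι] (W : Submodule K V) (ρ : V →ₗ[K] ι → K) (E : ι → V)
    (hE : ∀ m, E m ∈ W) (hρE : ∀ m, ρ (E m) = Pi.single m 1)
    (hρ : ∀ T ∈ W, ρ T = 0 → T = 0) :
    finrank K W = Fintype.card ι := by
  have hbij : Function.Bijective (ρ.domRestrict W) := by
    refine ⟨?_, fun v => ⟨⟨∑ m, v m • E m, W.sum_mem fun m _ => W.smul_mem _ (hE m)⟩, ?_⟩⟩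
    · rw [← LinearMap.ker_eq_bot, LinearMap.ker_eq_bot']
      rintro ⟨T, hT⟩ h
      exact Subtype.ext (hρ T hT h)
    · funext j
      simp [hρE, Finset.sum_apply, Pi.single_apply]
  rw [(LinearEquiv.ofBijective _ hbij).finrank_eq, Module.finrank_fintype_fun_eq_card]

variable {K ι : Type*} [Field K]

variable (K ι) in
def skewMatrices : Submodule K (ι → ι → K) where
  carrier := {A | ∀ k l, A k l = -A l k}
  add_mem' hA hB k l := by simp only [Pi.add_apply]; linear_combination hA k l + hB k l
  zero_mem' k l := by simp
  smul_mem' c A hA k l := by simp only [Pi.smul_apply, smul_eq_mul]; linear_combination c * hA k l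

theorem eq_zero_of_skew_of_upper [CharZero K] [LinearOrder ι] {A : ι → ι → K}
    (hA : ∀ k l, A k l = -A l k) (h : ∀ k l, k < l → A k l = 0) : A = 0 := by
  funext k l
  simp only [Pi.zero_apply]
  rcases lt_trichotomy k l with hkl | rfl | hkl
  · exact h k l hkl
  · linear_combination hA k k / 2
  · simpa [h l k hkl] using hA k l

section SkewCoordinates

variable [LinearOrder ι]

def skewReadout : (ι → ι → K) →ₗ[K] {p : ι × ι // p.1 < p.2} → K where
  toFun A p := A p.1.1 p.1.2
  map_add' _ _ := rfl
  map_smul' _ _ := rfl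

def skewUnit (p : ι × ι) : ι → ι → K := fun k l =>
  if (k, l) = p then 1 else if (l, k) = p then -1 else 0

theorem skewUnit_mem {p : ι × ι} (hp : p.1 < p.2) : skewUnit p ∈ skewMatrices K ι := by
  intro k l
  simp only [skewUnit]
  split_ifs with h₁ h₂
  · subst h₁
    obtain ⟨rfl, -⟩ := Prod.mk.inj h₂
    exact absurd hp (lt_irrefl _)
  all_goals simp

theorem skewReadout_skewUnit (p : {p : ι × ι // p.1 < p.2}) :
    skewReadout (skewUnit p.1) = (Pi.single p 1 : {p : ι × ι // p.1 < p.2} → K) := by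
  funext q
  obtain ⟨⟨a, b⟩, hab⟩ := q
  simp only [skewReadout, skewUnit, LinearMap.coe_mk, AddHom.coe_mk, Pi.single_apply,
    Subtype.ext_iff]
  split_ifs with h₁ h₂ <;> try rfl
  have hba : b < a := by simpa [← h₂] using p.2
  exact absurd hab (lt_asymm hba)

variable [CharZero K] [Fintype ι]

theorem finrank_skewMatrices :
    finrank K (skewMatrices K ι) = Fintype.card {p : ι × ι // p.1 < p.2} := by
  refine finrank_eq_card_of_readout _ skewReadout (fun p => skewUnit p.1)
    (fun p => skewUnit_mem p.2) skewReadout_skewUnit fun A hA h => ?_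
  exact eq_zero_of_skew_of_upper hA fun k l hkl => congrFun h ⟨(k, l), hkl⟩

end SkewCoordinates

variable (K ι) in
def curvatureTensors : Submodule K (ι → ι → ι → ι → K) where
  carrier := {T | (∀ i j k l, T i j k l = -T j i k l) ∧ (∀ i j k l, T i j k l = -T i j l k) ∧
      (∀ i j k l, T i j k l + T j k i l + T k i j l = 0)}
  add_mem' := by
    rintro T U ⟨hT₁, hT₂, hT₃⟩ ⟨hU₁, hU₂, hU₃⟩
    refine ⟨fun i j k l => ?_, fun i j k l => ?_, fun i j k l => ?_⟩ <;>
      simp only [Pi.add_apply]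
    · linear_combination hT₁ i j k l + hU₁ i j k l
    · linear_combination hT₂ i j k l + hU₂ i j k l
    · linear_combination hT₃ i j k l + hU₃ i j k l
  zero_mem' := by simp
  smul_mem' := by
    rintro c T ⟨hT₁, hT₂, hT₃⟩
    refine ⟨fun i j k l => ?_, fun i j k l => ?_, fun i j k l => ?_⟩ <;>
      simp only [Pi.smul_apply, smul_eq_mul]
    · linear_combination c * hT₁ i j k l
    · linear_combination c * hT₂ i j k l
    · linear_combination c * hT₃ i j k l

theorem eq_swap_pairs_of_mem_curvatureTensors [CharZero K] {T : ι → ι → ι → ι → K}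
    (hT : T ∈ curvatureTensors K ι) (a b c d : ι) : T a b c d = T c d a b := by
  obtain ⟨h₁, h₂, h₃⟩ := hT
  linear_combination (h₃ a b c d + h₃ b c d a - h₃ c d a b - h₃ d a b c
    + h₂ a b c d - h₂ b c a d - h₂ c d b a + h₂ d a c b
    - h₁ c a b d + h₂ a c b d - h₁ d b c a + h₂ b d c a) / 2

theorem eq_zero_of_antisymm_of_upper [CharZero K] [LinearOrder ι] {T : ι → ι → ι → ι → K}
    (h₁ : ∀ i j k l, T i j k l = -T j i k l) (h₂ : ∀ i j k l, T i j k l = -T i j l k)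
    (h : ∀ i j k l, i < j → k < l → T i j k l = 0) : T = 0 := by
  have upper : ∀ i j, i < j → T i j = 0 := fun i j hij =>
    eq_zero_of_skew_of_upper (h₂ i j) (h i j · · hij)
  funext i j k l
  exact congrFun (congrFun (eq_zero_of_skew_of_upper (fun i j => h₁ i j k l)
    fun i j hij => by simp [upper i j hij]) i) j

/-- Three times the projection of the symmetric product `Ω ⊗ A + A ⊗ Ω` of two 2-forms onto the
kernel of the cyclic sum. -/
def kulkarniNomizu (Ω A : ι → ι → K) : ι → ι → ι → ι → K := fun i j k l =>
  2 * Ω i j * A k l + 2 * Ω k l * A i j + Ω i k * A j l - Ω j k * A i l - Ω i l * A j k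
    + Ω j l * A i k

theorem kulkarniNomizu_mem {Ω A : ι → ι → K} (hΩ : Ω ∈ skewMatrices K ι)
    (hA : A ∈ skewMatrices K ι) : kulkarniNomizu Ω A ∈ curvatureTensors K ι := by
  refine ⟨fun i j k l => ?_, fun i j k l => ?_, fun i j k l => ?_⟩ <;> simp only [kulkarniNomizu]
  · linear_combination 2 * A k l * hΩ i j + 2 * Ω k l * hA i j
  · linear_combination 2 * Ω i j * hA k l + 2 * A i j * hΩ k l
  · linear_combination A k l * hΩ i j + Ω k l * hA i j + A j l * hΩ i k + A i l * hΩ j k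
      + Ω i l * hA j k + Ω j l * hA i k

variable [Fintype ι]

def pairTrace (Ω : ι → ι → K) : (ι → ι → ι → ι → K) →ₗ[K] ι → ι → K where
  toFun T k l := ∑ i, ∑ j, Ω i j * T i j k l
  map_add' T U := by funext k l; simp [mul_add, Finset.sum_add_distrib]
  map_smul' c T := by funext k l; simp [Finset.mul_sum, mul_left_comm]

theorem pairTrace_mem_skewMatrices (Ω : ι → ι → K) {T : ι → ι → ι → ι → K}
    (hT : T ∈ curvatureTensors K ι) : pairTrace Ω T ∈ skewMatrices K ι := by
  intro k l
  simp only [pairTrace, LinearMap.coe_mk, AddHom.coe_mk, ← Finset.sum_neg_distrib, hT.2.1 _ _ k l,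
    mul_neg]

theorem sum_mul_middle_eq_zero_of_pairTrace_eq_zero [CharZero K] {Ω : ι → ι → K}
    (hΩ : Ω ∈ skewMatrices K ι) {T : ι → ι → ι → ι → K} (hT : T ∈ curvatureTensors K ι)
    (htr : pairTrace Ω T = 0) (i l : ι) : ∑ j, ∑ k, Ω j k * T i j k l = 0 := by
  obtain ⟨h₁, -, h₃⟩ := hT
  have htr' : ∑ j, ∑ k, Ω j k * T j k i l = 0 := congrFun (congrFun htr i) l
  have hcyc : ∑ j, ∑ k, Ω j k * T k i j l = ∑ j, ∑ k, Ω j k * T i j k l := by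
    rw [Finset.sum_comm]
    refine Finset.sum_congr rfl fun a _ => Finset.sum_congr rfl fun b _ => ?_
    linear_combination T a i b l * hΩ b a - Ω a b * h₁ a i b l
  have hsplit : ∑ j, ∑ k, Ω j k * T i j k l
      = -∑ j, ∑ k, Ω j k * T j k i l - ∑ j, ∑ k, Ω j k * T k i j l := by
    simp only [← Finset.sum_neg_distrib, ← Finset.sum_sub_distrib]
    refine Finset.sum_congr rfl fun j _ => Finset.sum_congr rfl fun k _ => ?_
    linear_combination Ω j k * h₃ i j k l
  rw [htr', hcyc] at hsplit
  linear_combination hsplit / 2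

section InverseForm

variable [DecidableEq ι] {Ωup Ωlow : ι → ι → K} (hΩanti : ∀ i j, Ωup i j = -Ωup j i)
  (hΩinv : ∀ i k, ∑ j, Ωlow i j * Ωup j k = if i = k then 1 else 0)
include hΩinv

theorem matrix_of_mul_eq_one : Matrix.of Ωlow * Matrix.of Ωup = 1 := by
  ext i k
  simpa [Matrix.mul_apply, Matrix.one_apply] using hΩinv i k

theorem sum_mul_inv_eq (i k : ι) : ∑ j, Ωup i j * Ωlow j k = if i = k then 1 else 0 := by
  have h : Matrix.of Ωup * Matrix.of Ωlow = 1 := mul_eq_one_comm.mp (matrix_of_mul_eq_one hΩinv)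
  simpa [Matrix.mul_apply, Matrix.one_apply] using congrFun (congrFun h i) k

include hΩanti

theorem inv_antisymm (i j : ι) : Ωlow i j = -Ωlow j i := by
  have htr : (Matrix.of Ωup)ᵀ = -Matrix.of Ωup := by ext i j; simp [hΩanti j i]
  have hright : Matrix.of Ωup * -(Matrix.of Ωlow)ᵀ = 1 := by
    have := congrArg Matrix.transpose (matrix_of_mul_eq_one hΩinv)
    rwa [Matrix.transpose_mul, htr, Matrix.transpose_one, neg_mul, ← mul_neg] at this
  have h : Matrix.of Ωlow = -(Matrix.of Ωlow)ᵀ :=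
    left_inv_eq_right_inv (matrix_of_mul_eq_one hΩinv) hright
  simpa using congrFun (congrFun h i) j

theorem sum_transpose_mul_inv_eq (j k : ι) : ∑ i, Ωup i j * Ωlow i k = -if j = k then 1 else 0 := by
  calc ∑ i, Ωup i j * Ωlow i k = -∑ i, Ωlow k i * Ωup i j := by
        rw [← Finset.sum_neg_distrib]
        exact Finset.sum_congr rfl fun i _ => by rw [inv_antisymm hΩanti hΩinv i k]; ring
    _ = _ := by rw [hΩinv]; simp only [eq_comm]

theorem sum_sum_mul_inv_eq : ∑ i, ∑ j, Ωup i j * Ωlow i j = -Fintype.card ι := by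
  rw [Finset.sum_comm]
  simp [sum_transpose_mul_inv_eq hΩanti hΩinv]

theorem pairTrace_kulkarniNomizu {A : ι → ι → K} (hA : A ∈ skewMatrices K ι) (k l : ι) :
    pairTrace Ωup (kulkarniNomizu Ωlow A) k l
      = -(2 * Fintype.card ι + 4) * A k l + 2 * (∑ i, ∑ j, Ωup i j * A i j) * Ωlow k l := by
  have hsplit : pairTrace Ωup (kulkarniNomizu Ωlow A) k l
      = 2 * A k l * (∑ i, ∑ j, Ωup i j * Ωlow i j) + 2 * Ωlow k l * (∑ i, ∑ j, Ωup i j * A i j)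
        + ∑ i, ∑ j, Ωup i j * Ωlow i k * A j l - ∑ i, ∑ j, Ωup i j * Ωlow j k * A i l
        - ∑ i, ∑ j, Ωup i j * Ωlow i l * A j k + ∑ i, ∑ j, Ωup i j * Ωlow j l * A i k := by
    simp only [pairTrace, kulkarniNomizu, LinearMap.coe_mk, AddHom.coe_mk, Finset.mul_sum,
      ← Finset.sum_add_distrib, ← Finset.sum_sub_distrib]
    exact Finset.sum_congr rfl fun i _ => Finset.sum_congr rfl fun j _ => by ring
  have hfirst : ∀ a b, ∑ i, ∑ j, Ωup i j * Ωlow i a * A j b = -A a b := fun a b => by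
    rw [Finset.sum_comm]
    simp [← Finset.sum_mul, sum_transpose_mul_inv_eq hΩanti hΩinv]
  have hsecond : ∀ a b, ∑ i, ∑ j, Ωup i j * Ωlow j a * A i b = A a b := fun a b => by
    simp [← Finset.sum_mul, sum_mul_inv_eq hΩinv]
  rw [hsplit, hfirst, hfirst, hsecond, hsecond, sum_sum_mul_inv_eq hΩanti hΩinv]
  linear_combination 2 * hA l k

theorem map_pairTrace_curvatureTensors [CharZero K] :
    (curvatureTensors K ι).map (pairTrace Ωup) = skewMatrices K ι := by
  refine le_antisymm (Submodule.map_le_iff_le_comap.mpr fun T hT => pairTrace_mem_skewMatrices _ hT)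
    fun B hB => ?_
  have hn₁ : (Fintype.card ι + 1 : K) ≠ 0 := by norm_cast
  have hn₂ : (Fintype.card ι + 2 : K) ≠ 0 := by norm_cast
  set n : K := (Fintype.card ι : K) with hn
  set s := ∑ i, ∑ j, Ωup i j * B i j
  -- by `pairTrace_kulkarniNomizu` the trace is `A ↦ -(2n+4) A + 2 ⟨Ω, A⟩ Ω⁻¹`; invert it on `B`
  set a : K := -1 / (2 * (n + 2))
  set b : K := a * s / (2 * (n + 1))
  set A : ι → ι → K := fun k l => a * B k l + b * Ωlow k l
  have hA : A ∈ skewMatrices K ι := fun k l => by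
    simp only [A]
    linear_combination a * hB k l + b * inv_antisymm hΩanti hΩinv k l
  have hsA : ∑ i, ∑ j, Ωup i j * A i j = a * s - b * n := by
    have : ∑ i, ∑ j, Ωup i j * A i j
        = a * s + b * ∑ i, ∑ j, Ωup i j * Ωlow i j := by
      simp only [A, s, Finset.mul_sum, ← Finset.sum_add_distrib]
      exact Finset.sum_congr rfl fun i _ => Finset.sum_congr rfl fun j _ => by ring
    rw [this, sum_sum_mul_inv_eq hΩanti hΩinv]
    ring
  refine ⟨kulkarniNomizu Ωlow A, kulkarniNomizu_mem (inv_antisymm hΩanti hΩinv) hA, ?_⟩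
  funext k l
  rw [pairTrace_kulkarniNomizu hΩanti hΩinv hA, hsA, ← hn]
  simp only [A, a, b]
  field_simp
  ring

end InverseForm

def curvCoord : Fin 20 → (Fin 4 × Fin 4) × (Fin 4 × Fin 4) :=
  ![((0, 1), (0, 1)), ((0, 1), (0, 2)), ((0, 1), (0, 3)), ((0, 1), (1, 2)), ((0, 1), (1, 3)),
    ((0, 2), (0, 2)), ((0, 2), (0, 3)), ((0, 2), (1, 2)), ((0, 2), (1, 3)), ((0, 2), (2, 3)),
    ((0, 3), (0, 3)), ((0, 3), (1, 2)), ((0, 3), (1, 3)), ((0, 3), (2, 3)),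
    ((1, 2), (1, 2)), ((1, 2), (1, 3)), ((1, 2), (2, 3)),
    ((1, 3), (1, 3)), ((1, 3), (2, 3)),
    ((2, 3), (2, 3))]

def pairSign (i j : Fin 4) : ℤ := if i < j then 1 else if j < i then -1 else 0

def curvBasisCoeff (m : Fin 20) (p q : Fin 4 × Fin 4) : ℤ :=
  if (p, q) = ((0, 1), (2, 3)) ∨ (q, p) = ((0, 1), (2, 3)) then
    (if curvCoord m = ((0, 2), (1, 3)) then 1 else 0) -
      (if curvCoord m = ((0, 3), (1, 2)) then 1 else 0)
  else if (p, q) = curvCoord m ∨ (q, p) = curvCoord m then 1 else 0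

/-- The tensor dual to the coordinate `curvCoord m`: the symmetric product of the two bivectors it
names, plus `±` the symmetric product of `e₀ ∧ e₁` and `e₂ ∧ e₃` for the coordinates `(0,2,1,3)`
and `(0,3,1,2)`, which makes the cyclic sum vanish. -/
def curvBasis (m : Fin 20) (i j k l : Fin 4) : ℤ :=
  pairSign i j * pairSign k l * curvBasisCoeff m (min i j, max i j) (min k l, max k l)

theorem curvBasis_swap_left : ∀ m i j k l, curvBasis m j i k l = -curvBasis m i j k l := by
  decide

theorem curvBasis_swap_right : ∀ m i j k l, curvBasis m i j l k = -curvBasis m i j k l := by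
  decide

theorem curvBasis_cyclic :
    ∀ m i j k l, curvBasis m i j k l + curvBasis m j k i l + curvBasis m k i j l = 0 := by
  decide

theorem curvBasis_curvCoord : ∀ m m', curvBasis m (curvCoord m').1.1 (curvCoord m').1.2
    (curvCoord m').2.1 (curvCoord m').2.2 = if m' = m then 1 else 0 := by
  decide

theorem curvCoord_cover : ∀ i j k l : Fin 4, i < j → k < l →
    ((i, j), (k, l)) = ((0, 1), (2, 3)) ∨ ((k, l), (i, j)) = ((0, 1), (2, 3)) ∨
      ∃ m, curvCoord m = ((i, j), (k, l)) ∨ curvCoord m = ((k, l), (i, j)) := by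
  decide

def curvReadout : (Fin 4 → Fin 4 → Fin 4 → Fin 4 → K) →ₗ[K] Fin 20 → K where
  toFun T m := T (curvCoord m).1.1 (curvCoord m).1.2 (curvCoord m).2.1 (curvCoord m).2.2
  map_add' _ _ := rfl
  map_smul' _ _ := rfl

theorem curvBasis_mem (m : Fin 20) :
    (fun i j k l => (curvBasis m i j k l : K)) ∈ curvatureTensors K (Fin 4) := by
  refine ⟨fun i j k l => ?_, fun i j k l => ?_, fun i j k l => ?_⟩ <;> dsimp only
  · rw [curvBasis_swap_left m i j k l, Int.cast_neg, neg_neg]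
  · rw [curvBasis_swap_right m i j k l, Int.cast_neg, neg_neg]
  · have := congrArg (Int.cast : ℤ → K) (curvBasis_cyclic m i j k l)
    push_cast at this
    exact this

theorem curvReadout_curvBasis (m : Fin 20) :
    curvReadout (fun i j k l => (curvBasis m i j k l : K)) = Pi.single m 1 := by
  funext m'
  simp only [curvReadout, LinearMap.coe_mk, AddHom.coe_mk, curvBasis_curvCoord, Pi.single_apply]
  split_ifs <;> simp

theorem eq_zero_of_curvReadout_eq_zero [CharZero K] {T : Fin 4 → Fin 4 → Fin 4 → Fin 4 → K}
    (hT : T ∈ curvatureTensors K (Fin 4)) (h : curvReadout T = 0) : T = 0 := by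
  have hz (m : Fin 20) : T (curvCoord m).1.1 (curvCoord m).1.2 (curvCoord m).2.1
      (curvCoord m).2.2 = 0 := congrFun h m
  have hswap := eq_swap_pairs_of_mem_curvatureTensors hT
  obtain ⟨h₁, h₂, h₃⟩ := hT
  have h0123 : T 0 1 2 3 = 0 := by
    have h0213 : T 0 2 1 3 = 0 := hz 8
    have h0312 : T 0 3 1 2 = 0 := hz 11
    linear_combination h₃ 0 1 2 3 - h₁ 2 0 1 3 + h0213 - hswap 1 2 0 3 - h0312
  refine eq_zero_of_antisymm_of_upper h₁ h₂ fun i j k l hij hkl => ?_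
  rcases curvCoord_cover i j k l hij hkl with h | h | ⟨m, h | h⟩
  · simp only [Prod.mk.injEq] at h
    obtain ⟨⟨rfl, rfl⟩, rfl, rfl⟩ := h
    exact h0123
  · simp only [Prod.mk.injEq] at h
    obtain ⟨⟨rfl, rfl⟩, rfl, rfl⟩ := h
    rw [hswap, h0123]
  · simpa [h] using hz m
  · rw [hswap]
    simpa [h] using hz m

theorem finrank_curvatureTensors_fin_four [CharZero K] :
    finrank K (curvatureTensors K (Fin 4)) = 20 := by
  rw [finrank_eq_card_of_readout _ curvReadout _ curvBasis_mem curvReadout_curvBasis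
    fun _ hT h => eq_zero_of_curvReadout_eq_zero hT h, Fintype.card_fin]

theorem finrank_skewMatrices_fin_four [CharZero K] : finrank K (skewMatrices K (Fin 4)) = 6 := by
  rw [finrank_skewMatrices]
  decide

end SymplecticCurvature

open SymplecticCurvature in
/-- The irreducible Sp(4,ℂ)-representation of traceless window-shape curvature
tensors on `ℂ⁴` has complex dimension 14. -/
theorem stmt17 (Ωup Ωlow : Fin 4 → Fin 4 → ℂ)
    (hΩanti : ∀ i j, Ωup i j = -Ωup j i)
    (hΩinv : ∀ i k, ∑ j, Ωlow i j * Ωup j k = if i = k then 1 else 0)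
    (S : Submodule ℂ (Fin 4 → Fin 4 → Fin 4 → Fin 4 → ℂ))
    (hS : ∀ T, T ∈ S ↔
      ((∀ i j k l, T i j k l = -T j i k l) ∧
       (∀ i j k l, T i j k l = -T i j l k) ∧
       (∀ i j k l, T i j k l + T j k i l + T k i j l = 0) ∧
       (∀ k l, ∑ i, ∑ j, Ωup i j * T i j k l = 0) ∧
       (∀ i l, ∑ j, ∑ k, Ωup j k * T i j k l = 0))) :
    Module.finrank ℂ S = 14 := by
  have hS_eq : S = curvatureTensors ℂ (Fin 4) ⊓ LinearMap.ker (pairTrace Ωup) := by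
    ext T
    rw [hS, Submodule.mem_inf, LinearMap.mem_ker]
    constructor
    · rintro ⟨h₁, h₂, h₃, htr, -⟩
      exact ⟨⟨h₁, h₂, h₃⟩, funext fun k => funext fun l => htr k l⟩
    · rintro ⟨hT, htr⟩
      exact ⟨hT.1, hT.2.1, hT.2.2, fun k l => congrFun (congrFun htr k) l,
        sum_mul_middle_eq_zero_of_pairTrace_eq_zero hΩanti hT htr⟩
  have hrank := finrank_inf_ker_add_finrank_map (pairTrace Ωup) (curvatureTensors ℂ (Fin 4))
  rw [← hS_eq, map_pairTrace_curvatureTensors hΩanti hΩinv, finrank_curvatureTensors_fin_four,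
    finrank_skewMatrices_fin_four] at hrank
  omega
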